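/- arXiv:1211.6599 — 3 statements merged into one kernel-verified Lean document; each statement's English description precedes it below -/
import Mathlib

section
/- Let κ : [0,∞) → ℝ be convex with κ(0) = μ(0) > 1, κ(1) = γ > 1, κ'(1) = μ'(1)·γ + 1 where μ'(1) < 0, and suppose κ(θ)/θ → ∞ as θ → ∞. Define κ*(a) = sup_{θ≥0}(θa − κ(θ)) and Γ(κ*) = sup{a : κ*(a) < 0}. Then Γ(κ*) < γ. -/
/-- Convex-analytic step for atomlessness of the cascade measure: if `κ` is convex on `[0,∞)`
with `κ(0) > 1`, `κ(1) = γ > 1`, `κ'(1) = μ'(1)γ + 1` where `μ'(1) < 0`, and `κ` grows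
superlinearly, then `Γ(κ*) < γ`, where `κ*(a) = sup_{θ≥0}(θa − κ(θ))` and
`Γ(κ*) = sup{a : κ*(a) < 0}`. -/
theorem stmt_9 (κ : ℝ → ℝ) (γ μ'1 : ℝ)
    (hconv : ConvexOn ℝ (Set.Ici 0) κ)
    (h0 : 1 < κ 0) (hγ : 1 < γ) (h1 : κ 1 = γ)
    (hderiv : HasDerivAt κ (μ'1 * γ + 1) 1) (hμ' : μ'1 < 0)
    (hsuper : Filter.Tendsto (fun θ => κ θ / θ) Filter.atTop Filter.atTop)
    (κs : ℝ → ℝ) (hκs : ∀ a, κs a = sSup {x | ∃ θ : ℝ, 0 ≤ θ ∧ x = θ * a - κ θ})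
    (Γ : ℝ) (hΓ : Γ = sSup {a | κs a < 0}) :
    Γ < γ := by
  set c : ℝ := μ'1 * γ + 1 with hc_def
  have hc : c < γ := by nlinarith
  -- tangent line bound: κ θ ≥ γ + c * (θ - 1) for θ ≥ 0
  have htangent : ∀ θ : ℝ, 0 ≤ θ → γ + c * (θ - 1) ≤ κ θ := by
    intro θ hθ
    rcases lt_trichotomy θ 1 with h | h | h
    · have := hconv.slope_le_of_hasDerivAt hθ (by norm_num : (1:ℝ) ∈ Set.Ici 0) h hderiv
      rw [slope_def_field, h1] at this
      have h1θ : θ - 1 < 0 := by linarith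
      rw [div_le_iff₀ (by linarith : (0:ℝ) < 1 - θ)] at this
      nlinarith
    · simp [h, h1]
    · have := hconv.le_slope_of_hasDerivAt (by norm_num : (1:ℝ) ∈ Set.Ici 0) (le_trans zero_le_one h.le) h hderiv
      rw [slope_def_field, h1] at this
      rw [le_div_iff₀ (by linarith : (0:ℝ) < θ - 1)] at this
      nlinarith
  -- each set is bounded above
  have hbdd : ∀ a : ℝ, BddAbove {x | ∃ θ : ℝ, 0 ≤ θ ∧ x = θ * a - κ θ} := by
    intro a
    obtain ⟨T, hT⟩ := (hsuper.eventually_ge_atTop a).exists_forall_of_atTop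
    set T' := max T 1 with hT'
    refine ⟨T' * |a - c| + |c - γ|, ?_⟩
    rintro x ⟨θ, hθ, rfl⟩
    rcases le_or_gt θ T' with h | h
    · have h1 : θ * (a - c) ≤ T' * |a - c| := by
        calc θ * (a - c) ≤ θ * |a - c| := by
              exact mul_le_mul_of_nonneg_left (le_abs_self _) hθ
          _ ≤ T' * |a - c| := by
              exact mul_le_mul_of_nonneg_right h (abs_nonneg _)
      have h2 := htangent θ hθ
      have h3 : c - γ ≤ |c - γ| := le_abs_self _
      nlinarith
    · have hθpos : (0:ℝ) < θ := lt_of_le_of_lt (le_trans zero_le_one (le_max_right T 1)) h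
      have hκθ : a ≤ κ θ / θ := hT θ (le_trans (le_max_left T 1) h.le)
      have hle : θ * a ≤ κ θ := by
        rw [le_div_iff₀ hθpos] at hκθ; linarith
      have hT'1 : (1:ℝ) ≤ T' := le_max_right T 1
      nlinarith [abs_nonneg (a - c), abs_nonneg (c - γ)]
  -- find θ0 > 1 with κ θ0 < γ * θ0
  have hslope : Filter.Tendsto (slope κ 1) (nhdsWithin 1 {(1:ℝ)}ᶜ) (nhds c) :=
    hasDerivAt_iff_tendsto_slope.mp hderiv
  have hev : ∀ᶠ x in nhdsWithin 1 {(1:ℝ)}ᶜ, slope κ 1 x < γ :=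
    hslope.eventually_lt_const hc
  have hle : nhdsWithin (1:ℝ) (Set.Ioi 1) ≤ nhdsWithin 1 {(1:ℝ)}ᶜ :=
    nhdsWithin_mono 1 (fun x hx => ne_of_gt hx)
  obtain ⟨θ0, hθ0slope, hθ0mem⟩ :=
    ((hev.filter_mono hle).and self_mem_nhdsWithin).exists
  have hθ0 : (1:ℝ) < θ0 := hθ0mem
  have hθ0pos : (0:ℝ) < θ0 := lt_trans zero_lt_one hθ0
  have hκθ0 : κ θ0 < γ * θ0 := by
    have := hθ0slope
    rw [slope_def_field, h1] at this
    rw [div_lt_iff₀ (by linarith : (0:ℝ) < θ0 - 1)] at this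
    nlinarith
  set a0 : ℝ := κ θ0 / θ0 with ha0
  have ha0lt : a0 < γ := by
    rw [ha0, div_lt_iff₀ hθ0pos]; linarith
  have hbound : ∀ a ∈ {a | κs a < 0}, a ≤ a0 := by
    intro a ha
    have hmem : θ0 * a - κ θ0 ∈ {x | ∃ θ : ℝ, 0 ≤ θ ∧ x = θ * a - κ θ} :=
      ⟨θ0, hθ0pos.le, rfl⟩
    have : θ0 * a - κ θ0 ≤ κs a := by
      rw [hκs a]; exact le_csSup (hbdd a) hmem
    have hlt : θ0 * a - κ θ0 < 0 := lt_of_le_of_lt this ha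
    rw [ha0, le_div_iff₀ hθ0pos]
    linarith [mul_comm θ0 a]
  have : Γ ≤ max a0 0 := by
    rw [hΓ]
    exact Real.sSup_le (fun x hx => le_trans (hbound x hx) (le_max_left _ _)) (le_max_right _ _)
  have : max a0 0 < γ := max_lt ha0lt (by linarith)
  linarith
end

section
/- Let ζ be a finite measure on [0, T] defined via a nested sequence of partitions by intervals (T^{−n}_{k−1}, T^{−n}_k] with ζ((T^{−n}_{k−1}, T^{−n}_k]) = ρ^{−n}_k W^{−n}_k. If (a) max_k ρ^{−n}_k W^{−n}_k → 0 in probability as n → ∞ and (b) each W^{−n}_k > 0 a.s., and if the reference partition satisfies max_k μ^{−n} W^{−n}_k → 0, then the chronometer M(t) = ζ([0,t]) is continuous and strictly increasing, hence M and M^{−1} are both continuous. -/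
open MeasureTheory

/-- Continuity of the chronometer `M(t) = ζ([0,t])`: if the nested partitions
`0 = T n 0 < ... < T n (K n) = L` have time-mesh tending to 0, the `ζ`-masses of the partition
intervals tend to 0 uniformly (ζ has no atoms), and each partition interval has strictly
positive `ζ`-mass (no flat spots), then `M` is continuous and strictly increasing on `[0,L]`,
and its inverse `M⁻¹` is continuous as well. -/
theorem stmt_11 (ζ : Measure ℝ) [IsFiniteMeasure ζ]
    (T : ℕ → ℕ → ℝ) (K : ℕ → ℕ) (L : ℝ) (hL : 0 < L)
    (hT0 : ∀ n, T n 0 = 0) (hTK : ∀ n, T n (K n) = L)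
    (hmono : ∀ n, StrictMonoOn (T n) (Set.Iic (K n)))
    (hnested : ∀ n k, k ≤ K n → ∃ k' ≤ K (n + 1), T (n + 1) k' = T n k)
    (hmesh : ∀ ε > (0 : ℝ), ∃ N, ∀ n ≥ N, ∀ k < K n, T n (k + 1) - T n k < ε)
    (hatom : ∀ ε > (0 : ℝ), ∃ N, ∀ n ≥ N, ∀ k < K n,
      ζ (Set.Ioc (T n k) (T n (k + 1))) < ENNReal.ofReal ε)
    (hpos : ∀ n k, k < K n → 0 < ζ (Set.Ioc (T n k) (T n (k + 1))))
    (M : ℝ → ℝ) (hM : ∀ t, M t = (ζ (Set.Icc 0 t)).toReal)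
    (Minv : ℝ → ℝ) (hMinv : ∀ s, Minv s = sInf {t | t ∈ Set.Icc 0 L ∧ s ≤ M t}) :
    ContinuousOn M (Set.Icc 0 L) ∧ StrictMonoOn M (Set.Icc 0 L) ∧
      ContinuousOn Minv (Set.Icc (M 0) (M L)) := by
  classical
  have hfin : ∀ s : Set ℝ, ζ s ≠ ⊤ := fun s => measure_ne_top ζ s
  -- M is globally monotone
  have Mmono : Monotone M := by
    intro s t hst
    rw [hM, hM]
    exact ENNReal.toReal_mono (hfin _) (measure_mono (Set.Icc_subset_Icc_right hst))
  -- difference formula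
  have Mdiff : ∀ s t : ℝ, 0 ≤ s → s ≤ t → M t - M s = (ζ (Set.Ioc s t)).toReal := by
    intro s t hs hst
    have hdisj : Disjoint (Set.Icc 0 s) (Set.Ioc s t) :=
      (Set.Iic_disjoint_Ioc le_rfl).mono Set.Icc_subset_Iic_self le_rfl
    have hsplit : ζ (Set.Icc 0 t) = ζ (Set.Icc 0 s) + ζ (Set.Ioc s t) := by
      rw [← Set.Icc_union_Ioc_eq_Icc hs hst, measure_union hdisj measurableSet_Ioc]
    rw [hM, hM, hsplit, ENNReal.toReal_add (hfin _) (hfin _)]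
    ring
  -- locating a point in a partition
  have locate : ∀ n (s : ℝ), 0 ≤ s → s < L → ∃ k, k < K n ∧ T n k ≤ s ∧ s < T n (k + 1) := by
    intro n s hs hsL
    set k := Nat.findGreatest (fun k => T n k ≤ s) (K n) with hkdef
    have hks : T n k ≤ s :=
      Nat.findGreatest_spec (P := fun k => T n k ≤ s) (Nat.zero_le _) (show T n 0 ≤ s by rw [hT0]; exact hs)
    have hkK : k ≤ K n := Nat.findGreatest_le _
    have hkltK : k < K n := by
      rcases hkK.lt_or_eq with h | h
      · exact h
      · exfalso; rw [h, hTK] at hks; exact absurd hks (not_le.2 hsL)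
    refine ⟨k, hkltK, hks, ?_⟩
    by_contra hcon
    push_neg at hcon
    exact Nat.findGreatest_is_greatest (Nat.lt_succ_self k) hkltK hcon
  -- positivity of ζ on subintervals
  have hposIoc : ∀ s t : ℝ, 0 ≤ s → s < t → t ≤ L → 0 < ζ (Set.Ioc s t) := by
    intro s t hs hst htL
    obtain ⟨N, hN⟩ := hmesh ((t - s) / 2) (by linarith)
    obtain ⟨k, hk, hks, hsk⟩ := locate N s hs (lt_of_lt_of_le hst htL)
    have hg1 := hN N le_rfl k hk
    have h1 : T N (k + 1) < t := by linarith
    have hk1 : k + 1 < K N := by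
      rcases lt_or_ge (k + 1) (K N) with h | h
      · exact h
      · exfalso
        have : k + 1 = K N := le_antisymm hk h
        rw [this, hTK] at h1; linarith
    have hg2 := hN N le_rfl (k + 1) hk1
    have h2 : T N (k + 1 + 1) < t := by linarith
    calc (0 : ENNReal) < ζ (Set.Ioc (T N (k + 1)) (T N (k + 1 + 1))) := hpos N (k + 1) hk1
      _ ≤ ζ (Set.Ioc s t) := measure_mono (Set.Ioc_subset_Ioc hsk.le h2.le)
  -- strict monotonicity
  have hMstrict : StrictMonoOn M (Set.Icc 0 L) := by
    intro s hs t ht hst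
    have h := Mdiff s t hs.1 hst.le
    have hp : 0 < (ζ (Set.Ioc s t)).toReal :=
      ENNReal.toReal_pos (ne_of_gt (hposIoc s t hs.1 hst ht.2)) (hfin _)
    linarith
  -- small oscillation
  have hsmall : ∀ ε > (0 : ℝ), ∃ δ > (0 : ℝ), ∀ u v : ℝ, 0 ≤ u → u ≤ v → v ≤ L →
      v - u < δ → (ζ (Set.Ioc u v)).toReal < ε := by
    intro ε hε
    obtain ⟨N, hN⟩ := hatom (ε / 2) (by linarith)
    have hK0 : 0 < K N := by
      rcases Nat.eq_zero_or_pos (K N) with h | h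
      · exfalso
        have h1 := hTK N
        have h2 := hT0 N
        rw [h] at h1
        rw [h1] at h2; linarith
      · exact h
    have hne : (Finset.range (K N)).Nonempty := ⟨0, Finset.mem_range.2 hK0⟩
    set δ := (Finset.range (K N)).inf' hne (fun k => T N (k + 1) - T N k) with hδdef
    have hδpos : 0 < δ := by
      rw [hδdef, Finset.lt_inf'_iff]
      intro k hk
      have hk' := Finset.mem_range.1 hk
      have := hmono N (Set.mem_Iic.2 hk'.le) (Set.mem_Iic.2 hk') (Nat.lt_succ_self k)
      linarith
    refine ⟨δ, hδpos, ?_⟩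
    intro u v hu huv hvL hd
    rcases eq_or_lt_of_le huv with rfl | huv'
    · simpa using hε
    obtain ⟨k, hk, hku, huk⟩ := locate N u hu (lt_of_lt_of_le huv' hvL)
    have toReal_lt : ∀ s : Set ℝ, ζ s < ENNReal.ofReal ε → (ζ s).toReal < ε := by
      intro s h
      have := (ENNReal.toReal_lt_toReal (hfin s) ENNReal.ofReal_ne_top).2 h
      rwa [ENNReal.toReal_ofReal hε.le] at this
    rcases lt_or_ge (k + 1) (K N) with hk1 | hk1
    · -- two intervals case
      have hgap2 : δ ≤ T N (k + 1 + 1) - T N (k + 1) :=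
        Finset.inf'_le _ (Finset.mem_range.2 hk1)
      have hv : v ≤ T N (k + 1 + 1) := by linarith
      have hsub : Set.Ioc u v ⊆ Set.Ioc (T N k) (T N (k + 1 + 1)) :=
        Set.Ioc_subset_Ioc hku hv
      have hTle1 : T N k ≤ T N (k + 1) :=
        (hmono N (Set.mem_Iic.2 (le_of_lt (Nat.lt_of_lt_of_le hk le_rfl)))
          (Set.mem_Iic.2 hk1.le) (Nat.lt_succ_self k)).le
      have hTle2 : T N (k + 1) ≤ T N (k + 1 + 1) := by linarith
      have hb : ζ (Set.Ioc u v) < ENNReal.ofReal ε := by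
        calc ζ (Set.Ioc u v) ≤ ζ (Set.Ioc (T N k) (T N (k + 1 + 1))) := measure_mono hsub
          _ ≤ ζ (Set.Ioc (T N k) (T N (k + 1))) + ζ (Set.Ioc (T N (k + 1)) (T N (k + 1 + 1))) := by
              rw [← Set.Ioc_union_Ioc_eq_Ioc hTle1 hTle2]
              exact measure_union_le _ _
          _ < ENNReal.ofReal (ε / 2) + ENNReal.ofReal (ε / 2) :=
              ENNReal.add_lt_add (hN N le_rfl k hk) (hN N le_rfl (k + 1) hk1)
          _ = ENNReal.ofReal ε := by
              rw [← ENNReal.ofReal_add (by linarith) (by linarith)]; ring_nf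
      exact toReal_lt _ hb
    · -- one interval case: k + 1 = K N
      have hkK : k + 1 = K N := le_antisymm hk hk1
      have hv : v ≤ T N (k + 1) := by rw [hkK, hTK]; exact hvL
      have hb : ζ (Set.Ioc u v) < ENNReal.ofReal ε := by
        calc ζ (Set.Ioc u v) ≤ ζ (Set.Ioc (T N k) (T N (k + 1))) :=
              measure_mono (Set.Ioc_subset_Ioc hku hv)
          _ < ENNReal.ofReal (ε / 2) := hN N le_rfl k hk
          _ ≤ ENNReal.ofReal ε := ENNReal.ofReal_le_ofReal (by linarith)
      exact toReal_lt _ hb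
  -- continuity of M
  have hMcont : ContinuousOn M (Set.Icc 0 L) := by
    rw [Metric.continuousOn_iff]
    intro t ht ε hε
    obtain ⟨δ, hδ, hsd⟩ := hsmall ε hε
    refine ⟨δ, hδ, ?_⟩
    intro s hs hdist
    rw [Real.dist_eq] at hdist
    rw [Real.dist_eq]
    rcases le_total s t with h | h
    · have hd := Mdiff s t hs.1 h
      have habs : |M s - M t| = M t - M s := by
        rw [abs_sub_comm]; exact abs_of_nonneg (by linarith [Mmono h])
      rw [habs, hd]
      exact hsd s t hs.1 h ht.2 (by rw [abs_sub_comm] at hdist; rw [abs_of_nonneg (by linarith)] at hdist; linarith)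
    · have hd := Mdiff t s ht.1 h
      have habs : |M s - M t| = M s - M t := abs_of_nonneg (by linarith [Mmono h])
      rw [habs, hd]
      exact hsd t s ht.1 h hs.2 (by rw [abs_of_nonneg (by linarith)] at hdist; linarith)
  refine ⟨hMcont, hMstrict, ?_⟩
  -- inverse function facts
  have hbdd : ∀ s : ℝ, BddBelow {t | t ∈ Set.Icc 0 L ∧ s ≤ M t} :=
    fun s => ⟨0, fun x hx => hx.1.1⟩
  have hMinvM : ∀ t ∈ Set.Icc 0 L, Minv (M t) = t := by
    intro t ht
    rw [hMinv]
    apply le_antisymm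
    · refine csInf_le (hbdd _) ?_
      exact ⟨ht, le_rfl⟩
    · refine le_csInf ⟨t, ?_⟩ ?_
      · exact ⟨ht, le_rfl⟩
      intro x hx
      by_contra h
      push_neg at h
      exact absurd hx.2 (not_le.2 (hMstrict hx.1 ht h))
  have hMinvmono : ∀ s s' : ℝ, s ≤ s' → s' ≤ M L → Minv s ≤ Minv s' := by
    intro s s' hss hsl
    rw [hMinv, hMinv]
    refine csInf_le_csInf (hbdd _) ⟨L, ?_⟩ ?_
    · exact ⟨⟨hL.le, le_rfl⟩, hsl⟩
    intro x hx
    exact ⟨hx.1, hss.trans hx.2⟩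
  have hMinvleL : ∀ s : ℝ, s ≤ M L → Minv s ≤ L := by
    intro s h
    rw [hMinv]
    exact csInf_le (hbdd _) ⟨⟨hL.le, le_rfl⟩, h⟩
  have hMinvge0 : ∀ s : ℝ, s ≤ M L → 0 ≤ Minv s := by
    intro s h
    rw [hMinv]
    exact le_csInf ⟨L, ⟨hL.le, le_rfl⟩, h⟩ fun x hx => hx.1.1
  have hsurj : Set.Icc (M 0) (M L) ⊆ M '' Set.Icc 0 L :=
    intermediate_value_Icc hL.le hMcont
  -- continuity of Minv
  rw [Metric.continuousOn_iff]
  intro s₀ hs₀ ε hε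
  obtain ⟨t₀, ht₀, hMt₀⟩ := hsurj hs₀
  have hMinvs₀ : Minv s₀ = t₀ := by rw [← hMt₀, hMinvM t₀ ht₀]
  set ε' := ε / 2 with hε'def
  have hε' : 0 < ε' := by positivity
  set δ₁ := if h : t₀ + ε' ≤ L then M (t₀ + ε') - s₀ else 1 with hδ₁def
  set δ₂ := if h : 0 ≤ t₀ - ε' then s₀ - M (t₀ - ε') else 1 with hδ₂def
  have hδ₁pos : 0 < δ₁ := by
    rw [hδ₁def]
    split_ifs with h
    · have := hMstrict ht₀ ⟨by linarith [ht₀.1], h⟩ (by linarith)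
      rw [hMt₀] at this; linarith
    · norm_num
  have hδ₂pos : 0 < δ₂ := by
    rw [hδ₂def]
    split_ifs with h
    · have := hMstrict ⟨h, by linarith [ht₀.2]⟩ ht₀ (by linarith)
      rw [hMt₀] at this; linarith
    · norm_num
  refine ⟨min δ₁ δ₂, lt_min hδ₁pos hδ₂pos, ?_⟩
  intro s hs hdist
  rw [Real.dist_eq] at hdist
  rw [Real.dist_eq, hMinvs₀]
  have hds : |s - s₀| < δ₁ ∧ |s - s₀| < δ₂ :=
    ⟨lt_of_lt_of_le hdist (min_le_left _ _), lt_of_lt_of_le hdist (min_le_right _ _)⟩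
  have hupper : Minv s ≤ t₀ + ε' := by
    by_cases h : t₀ + ε' ≤ L
    · have hδ₁eq : δ₁ = M (t₀ + ε') - s₀ := by rw [hδ₁def, dif_pos h]
      have hsle : s ≤ M (t₀ + ε') := by
        have := abs_lt.1 hds.1; rw [hδ₁eq] at this; linarith [this.2]
      have hmem : t₀ + ε' ∈ Set.Icc 0 L := ⟨by linarith [ht₀.1], h⟩
      calc Minv s ≤ Minv (M (t₀ + ε')) :=
            hMinvmono s _ hsle (Mmono hmem.2)
        _ = t₀ + ε' := hMinvM _ hmem
    · push_neg at h
      calc Minv s ≤ L := hMinvleL s hs.2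
        _ ≤ t₀ + ε' := h.le
  have hlower : t₀ - ε' ≤ Minv s := by
    by_cases h : 0 ≤ t₀ - ε'
    · have hδ₂eq : δ₂ = s₀ - M (t₀ - ε') := by rw [hδ₂def, dif_pos h]
      have hsle : M (t₀ - ε') ≤ s := by
        have := abs_lt.1 hds.2; rw [hδ₂eq] at this; linarith [this.1]
      have hmem : t₀ - ε' ∈ Set.Icc 0 L := ⟨h, by linarith [ht₀.2]⟩
      calc t₀ - ε' = Minv (M (t₀ - ε')) := (hMinvM _ hmem).symm
        _ ≤ Minv s := hMinvmono _ s hsle hs.2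
    · push_neg at h
      calc t₀ - ε' ≤ 0 := h.le
        _ ≤ Minv s := hMinvge0 s hs.2
  rw [abs_lt]
  constructor <;> [linarith; linarith]
end

section
/- Let X^{−n} be a sequence of continuous piecewise-linear processes on [0,T] such that: (i) for each n and each k, X^{−q}(T_k^{−n,−q}) = X^{−n}(kμ^{−n}) for all q ≥ n; (ii) with probability at least 1−ε, for all q ≥ u and t ∈ [0,T], the index k with T^{−n}_{k−1} ≤ t < T^{−n}_k satisfies T^{−n,−q}_{k−2} < t < T^{−n,−q}_{k+1}; and (iii) X^{−n} moves at most 2^{−n} between consecutive passage times. Then |X^{−r}(t) − X^{−s}(t)| ≤ 6·2^{−n} for all r, s ≥ u and t ∈ [0,T] with probability ≥ 1−ε; consequently X^{−n} converges uniformly on [0,T] almost surely to a continuous limit. -/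
/-!
Fix a level `n` and a walk `f = X^{−q}` with `q ≥ n`. Along its level-`n` passage times `τ_k` it
visits the grid values `g_k = X^{−n}(k μ^{−n})` and oscillates by at most `δ = 2^{−n}` on each
`[τ_k, τ_{k+1}]`; in particular consecutive grid values differ by at most `δ`. A time `t` with
`τ_{k−1} < t < τ_{k+2}` lies in `[τ_j, τ_{j+1}]` for some `j ∈ {k−1, k, k+1}`, so `f t` is within
`2δ` of `g_k`. For `r, s ≥ u` both walks bracket `t` around the same `k`, which gives
`|X^{−r}(t) − X^{−s}(t)| ≤ 4δ`. Letting `n → ∞`, the walks are uniformly Cauchy on `[0, T]`,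
hence converge uniformly, and the limit is continuous.
-/

open Filter Topology Set

section UniformLimit

variable {ι α β : Type*}

theorem uniformCauchySeqOn_of_dist_le [PseudoMetricSpace β] {F : ℕ → α → β} {S : Set α}
    {b : ℕ → ℝ} (hb : Tendsto b atTop (𝓝 0))
    (h : ∀ n, ∃ u, ∀ r ≥ u, ∀ s ≥ u, ∀ t ∈ S, dist (F r t) (F s t) ≤ b n) :
    UniformCauchySeqOn F atTop S := by
  rw [Metric.uniformCauchySeqOn_iff]
  intro ε hε
  obtain ⟨n, hn⟩ := (hb.eventually (gt_mem_nhds hε)).exists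
  obtain ⟨u, hu⟩ := h n
  exact ⟨u, fun r hr s hs t ht => (hu r hr s hs t ht).trans_lt hn⟩

theorem UniformCauchySeqOn.exists_tendstoUniformlyOn [UniformSpace β] [CompleteSpace β]
    [Nonempty ι] [SemilatticeSup ι] {F : ι → α → β} {S : Set α}
    (hF : UniformCauchySeqOn F atTop S) : ∃ G : α → β, TendstoUniformlyOn F G atTop S :=
  ⟨fun t => @limUnder _ _ _ ⟨F (Classical.arbitrary ι) t⟩ atTop fun i => F i t,
    hF.tendstoUniformlyOn_of_tendsto fun _ ht => (hF.cauchySeq ht).tendsto_limUnder⟩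

end UniformLimit

section PassageTimes

variable {f : ℝ → ℝ} {τ : ℕ → ℝ} {g : ℕ → ℝ} {δ : ℝ}

theorem abs_sub_le_of_mem_Icc_passage (hfg : ∀ k, f (τ k) = g k)
    (hosc : ∀ k, ∀ t ∈ Icc (τ k) (τ (k + 1)), |f t - f (τ k)| ≤ δ) {j : ℕ} {t : ℝ}
    (ht : t ∈ Icc (τ j) (τ (j + 1))) : |f t - g j| ≤ δ :=
  hfg j ▸ hosc j t ht

theorem abs_sub_succ_le_of_passage (hτ : Monotone τ) (hfg : ∀ k, f (τ k) = g k)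
    (hosc : ∀ k, ∀ t ∈ Icc (τ k) (τ (k + 1)), |f t - f (τ k)| ≤ δ) (k : ℕ) :
    |g (k + 1) - g k| ≤ δ :=
  hfg (k + 1) ▸ abs_sub_le_of_mem_Icc_passage hfg hosc ⟨hτ k.le_succ, le_rfl⟩

theorem abs_sub_le_two_mul_of_mem_Ioo_passage (hτ : Monotone τ) (hfg : ∀ k, f (τ k) = g k)
    (hosc : ∀ k, ∀ t ∈ Icc (τ k) (τ (k + 1)), |f t - f (τ k)| ≤ δ) {k : ℕ} {t : ℝ}
    (ht : t ∈ Ioo (τ (k - 1)) (τ (k + 2))) : |f t - g k| ≤ 2 * δ := by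
  have hstep := abs_sub_succ_le_of_passage hτ hfg hosc
  obtain ⟨j, htj, hjk⟩ : ∃ j, t ∈ Icc (τ j) (τ (j + 1)) ∧ |g j - g k| ≤ δ := by
    rcases le_or_gt t (τ k) with htk | htk
    · obtain ⟨i, rfl⟩ : ∃ i, k = i + 1 := by
        rcases k with _ | i
        · exact absurd htk (not_le.2 ht.1) -- `0 - 1 = 0` in `ℕ`, so `τ 0 < t ≤ τ 0`
        · exact ⟨i, rfl⟩
      exact ⟨i, ⟨ht.1.le, htk⟩, abs_sub_comm (g (i + 1)) (g i) ▸ hstep i⟩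
    rcases le_or_gt t (τ (k + 1)) with htk' | htk'
    · exact ⟨k, ⟨htk.le, htk'⟩, by simpa using (abs_nonneg _).trans (hstep k)⟩
    · exact ⟨k + 1, ⟨htk'.le, ht.2.le⟩, hstep k⟩
  calc |f t - g k| ≤ |f t - g j| + |g j - g k| := abs_sub_le _ _ _
    _ ≤ 2 * δ := by linarith [abs_sub_le_of_mem_Icc_passage hfg hosc htj]

end PassageTimes

theorem stmt_14_general (μ TT : ℝ)
    (X : ℕ → ℝ → ℝ) (T : ℕ → ℕ → ℕ → ℝ) (Tlim : ℕ → ℕ → ℝ)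
    (hcont : ∀ q, Continuous (X q))
    (hmonoT : ∀ n q, Monotone (T n q))
    (h1 : ∀ n q k, n ≤ q → X q (T n q k) = X n ((k : ℝ) * μ ^ (-(n : ℤ))))
    (hiii : ∀ n q k, n ≤ q → ∀ t ∈ Set.Icc (T n q k) (T n q (k + 1)),
      |X q t - X q (T n q k)| ≤ (2 : ℝ) ^ (-(n : ℤ)))
    (hk : ∀ n, ∀ t ∈ Set.Icc 0 TT, ∃ k, Tlim n k ≤ t ∧ t < Tlim n (k + 1)) :
    (∀ n u, n ≤ u →
      (∀ q, u ≤ q → ∀ t ∈ Set.Icc 0 TT, ∀ k, Tlim n k ≤ t → t < Tlim n (k + 1) →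
        T n q (k - 1) < t ∧ t < T n q (k + 2)) →
      ∀ r s, u ≤ r → u ≤ s → ∀ t ∈ Set.Icc 0 TT,
        |X r t - X s t| ≤ 6 * (2 : ℝ) ^ (-(n : ℤ))) ∧
    ((∀ n, ∃ u, n ≤ u ∧
        ∀ q, u ≤ q → ∀ t ∈ Set.Icc 0 TT, ∀ k, Tlim n k ≤ t → t < Tlim n (k + 1) →
          T n q (k - 1) < t ∧ t < T n q (k + 2)) →
      ∃ Y : ℝ → ℝ, ContinuousOn Y (Set.Icc 0 TT) ∧
        TendstoUniformlyOn X Y atTop (Set.Icc 0 TT)) := by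
  refine (and_iff_left_of_imp fun hbound hbracket => ?limit).mpr ?bound
  case bound =>
    intro n u hnu hbracket r s hr hs t ht
    obtain ⟨k, hk₁, hk₂⟩ := hk n t ht
    have hnear : ∀ q, u ≤ q → |X q t - X n (k * μ ^ (-(n : ℤ)))| ≤ 2 * 2 ^ (-(n : ℤ)) :=
      fun q hq => abs_sub_le_two_mul_of_mem_Ioo_passage (hmonoT n q)
        (h1 n q · (hnu.trans hq)) (hiii n q · (hnu.trans hq)) (hbracket q hq t ht k hk₁ hk₂)
    have htri := abs_sub_le (X r t) (X n (k * μ ^ (-(n : ℤ)))) (X s t)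
    rw [abs_sub_comm (X n _)] at htri
    linarith [hnear r hr, hnear s hs, zpow_pos (two_pos (α := ℝ)) (-(n : ℤ))]
  case limit =>
    have hdecay : Tendsto (fun n : ℕ => 6 * (2 : ℝ) ^ (-(n : ℤ))) atTop (𝓝 0) := by
      simpa [zpow_neg, inv_pow] using
        (tendsto_pow_atTop_nhds_zero_of_lt_one (by norm_num : (0 : ℝ) ≤ 2⁻¹)
          (by norm_num)).const_mul 6
    have hCauchy : UniformCauchySeqOn X atTop (Set.Icc 0 TT) :=
      uniformCauchySeqOn_of_dist_le hdecay fun n =>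
        let ⟨u, hnu, hu⟩ := hbracket n
        ⟨u, fun r hr s hs t ht => (Real.dist_eq _ _).trans_le (hbound n u hnu hu r s hr hs t ht)⟩
    obtain ⟨Y, hY⟩ := hCauchy.exists_tendstoUniformlyOn
    exact ⟨Y, hY.continuousOn (Frequently.of_forall fun q => (hcont q).continuousOn), hY⟩

/-- Uniform Cauchy estimate in the CEBP construction: if the approximating walks `X^{−q}`
agree with `X^{−n}` at the level-`n` passage times, each moves at most `2^{−n}` between
consecutive level-`n` passage times, and for `q ≥ u` every `t ∈ [0,T]` is bracketed as
`T^{−n,−q}_{k−1} < t < T^{−n,−q}_{k+2}` (where `Tlim n k ≤ t < Tlim n (k+1)`), then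
`|X^{−r}(t) − X^{−s}(t)| ≤ 6·2^{−n}` for all `r, s ≥ u` and `t ∈ [0,T]`; consequently, if
such a `u` exists for every `n`, the `X^{−n}` converge uniformly on `[0,T]` to a continuous
limit. -/
theorem stmt_14 (μ TT : ℝ) (hμ : 1 < μ) (hTT : 0 < TT)
    (X : ℕ → ℝ → ℝ) (T : ℕ → ℕ → ℕ → ℝ) (Tlim : ℕ → ℕ → ℝ)
    (hcont : ∀ q, Continuous (X q))
    (hmonoT : ∀ n q, Monotone (T n q))
    (h1 : ∀ n q k, n ≤ q → X q (T n q k) = X n ((k : ℝ) * μ ^ (-(n : ℤ))))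
    (hiii : ∀ n q k, n ≤ q → ∀ t ∈ Set.Icc (T n q k) (T n q (k + 1)),
      |X q t - X q (T n q k)| ≤ (2 : ℝ) ^ (-(n : ℤ)))
    (hk : ∀ n, ∀ t ∈ Set.Icc 0 TT, ∃ k, Tlim n k ≤ t ∧ t < Tlim n (k + 1)) :
    (∀ n u, n ≤ u →
      (∀ q, u ≤ q → ∀ t ∈ Set.Icc 0 TT, ∀ k, Tlim n k ≤ t → t < Tlim n (k + 1) →
        T n q (k - 1) < t ∧ t < T n q (k + 2)) →
      ∀ r s, u ≤ r → u ≤ s → ∀ t ∈ Set.Icc 0 TT,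
        |X r t - X s t| ≤ 6 * (2 : ℝ) ^ (-(n : ℤ))) ∧
    ((∀ n, ∃ u, n ≤ u ∧
        ∀ q, u ≤ q → ∀ t ∈ Set.Icc 0 TT, ∀ k, Tlim n k ≤ t → t < Tlim n (k + 1) →
          T n q (k - 1) < t ∧ t < T n q (k + 2)) →
      ∃ Y : ℝ → ℝ, ContinuousOn Y (Set.Icc 0 TT) ∧
        TendstoUniformlyOn X Y atTop (Set.Icc 0 TT)) :=
  stmt_14_general μ TT X T Tlim hcont hmonoT h1 hiii hk
end
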